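/- Let C be an abelian category and A the heart category of complexes [A \to B \to C] (first map injective, exact in the middle, morphisms modulo homotopy). For every object X of C, the object P_X = [0 \to 0 \to X] is projective in A; moreover every projective object of A is isomorphic to some P_X, so Proj(A) is equivalent to C. -/

import Mathlib

open CategoryTheory Limits

namespace ARHeart

variable (C : Type*) [Category C] [Abelian C]

/-- Objects of the heart `𝒜`: complexes `[A ⟶ B ⟶ Z]` in degrees `-2, -1, 0`
with the first map a monomorphism and `Ker g = Im f`. -/
structure Obj : Type _ where
  A : C
  B : C
  Z : C
  f : A ⟶ B
  g : B ⟶ Z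
  w : f ≫ g = 0
  mono : Mono f
  exact : (ShortComplex.mk f g w).Exact

variable {C}

/-- Chain maps between heart objects. -/
@[ext]
structure Hom (V W : Obj C) where
  a : V.A ⟶ W.A
  b : V.B ⟶ W.B
  c : V.Z ⟶ W.Z
  comm₁ : V.f ≫ b = a ≫ W.f
  comm₂ : V.g ≫ c = b ≫ W.g

namespace Hom

variable {U V W : Obj C}

instance : Zero (Hom V W) := ⟨⟨0, 0, 0, by simp, by simp⟩⟩
instance : Add (Hom V W) :=
  ⟨fun φ ψ => ⟨φ.a + ψ.a, φ.b + ψ.b, φ.c + ψ.c,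
    by simp [Preadditive.comp_add, Preadditive.add_comp, φ.comm₁, ψ.comm₁],
    by simp [Preadditive.comp_add, Preadditive.add_comp, φ.comm₂, ψ.comm₂]⟩⟩
instance : Neg (Hom V W) :=
  ⟨fun φ => ⟨-φ.a, -φ.b, -φ.c,
    by simp [φ.comm₁], by simp [φ.comm₂]⟩⟩
instance : Sub (Hom V W) :=
  ⟨fun φ ψ => ⟨φ.a - ψ.a, φ.b - ψ.b, φ.c - ψ.c,
    by simp [Preadditive.comp_sub, Preadditive.sub_comp, φ.comm₁, ψ.comm₁],
    by simp [Preadditive.comp_sub, Preadditive.sub_comp, φ.comm₂, ψ.comm₂]⟩⟩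
instance : SMul ℕ (Hom V W) :=
  ⟨fun n φ => ⟨n • φ.a, n • φ.b, n • φ.c,
    by simp [φ.comm₁], by simp [φ.comm₂]⟩⟩
instance : SMul ℤ (Hom V W) :=
  ⟨fun n φ => ⟨n • φ.a, n • φ.b, n • φ.c,
    by simp [φ.comm₁], by simp [φ.comm₂]⟩⟩

@[simp] lemma add_a (φ ψ : Hom V W) : (φ + ψ).a = φ.a + ψ.a := rfl
@[simp] lemma add_b (φ ψ : Hom V W) : (φ + ψ).b = φ.b + ψ.b := rfl
@[simp] lemma add_c (φ ψ : Hom V W) : (φ + ψ).c = φ.c + ψ.c := rfl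
@[simp] lemma sub_a (φ ψ : Hom V W) : (φ - ψ).a = φ.a - ψ.a := rfl
@[simp] lemma sub_b (φ ψ : Hom V W) : (φ - ψ).b = φ.b - ψ.b := rfl
@[simp] lemma sub_c (φ ψ : Hom V W) : (φ - ψ).c = φ.c - ψ.c := rfl
@[simp] lemma neg_a (φ : Hom V W) : (-φ).a = -φ.a := rfl
@[simp] lemma neg_b (φ : Hom V W) : (-φ).b = -φ.b := rfl
@[simp] lemma neg_c (φ : Hom V W) : (-φ).c = -φ.c := rfl
@[simp] lemma zero_a : (0 : Hom V W).a = 0 := rfl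
@[simp] lemma zero_b : (0 : Hom V W).b = 0 := rfl
@[simp] lemma zero_c : (0 : Hom V W).c = 0 := rfl

instance : AddCommGroup (Hom V W) :=
  Function.Injective.addCommGroup
    (fun φ => (φ.a, φ.b, φ.c))
    (fun φ ψ h => by
      ext <;> simp only [Prod.mk.injEq] at h <;> tauto)
    rfl (fun _ _ => rfl) (fun _ => rfl) (fun _ _ => rfl) (fun _ _ => rfl) (fun _ _ => rfl)

/-- Identity chain map. -/
def id (V : Obj C) : Hom V V := ⟨𝟙 _, 𝟙 _, 𝟙 _, by simp, by simp⟩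

/-- Composition of chain maps. -/
def comp (φ : Hom U V) (ψ : Hom V W) : Hom U W :=
  ⟨φ.a ≫ ψ.a, φ.b ≫ ψ.b, φ.c ≫ ψ.c,
    by rw [← Category.assoc, φ.comm₁, Category.assoc, ψ.comm₁, Category.assoc],
    by rw [← Category.assoc, φ.comm₂, Category.assoc, ψ.comm₂, Category.assoc]⟩

@[simp] lemma comp_a (φ : Hom U V) (ψ : Hom V W) : (φ.comp ψ).a = φ.a ≫ ψ.a := rfl
@[simp] lemma comp_b (φ : Hom U V) (ψ : Hom V W) : (φ.comp ψ).b = φ.b ≫ ψ.b := rfl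
@[simp] lemma comp_c (φ : Hom U V) (ψ : Hom V W) : (φ.comp ψ).c = φ.c ≫ ψ.c := rfl

lemma sub_comp (φ φ' : Hom U V) (ψ : Hom V W) :
    (φ - φ').comp ψ = φ.comp ψ - φ'.comp ψ := by
  ext <;> simp [Preadditive.sub_comp]

lemma comp_sub (φ : Hom U V) (ψ ψ' : Hom V W) :
    φ.comp (ψ - ψ') = φ.comp ψ - φ.comp ψ' := by
  ext <;> simp [Preadditive.comp_sub]

lemma add_comp (φ φ' : Hom U V) (ψ : Hom V W) :
    (φ + φ').comp ψ = φ.comp ψ + φ'.comp ψ := by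
  ext <;> simp [Preadditive.add_comp]

lemma comp_add (φ : Hom U V) (ψ ψ' : Hom V W) :
    φ.comp (ψ + ψ') = φ.comp ψ + φ.comp ψ' := by
  ext <;> simp [Preadditive.comp_add]

end Hom

/-- The subgroup of chain maps homotopic to zero. -/
def nullHomotopic (V W : Obj C) : AddSubgroup (Hom V W) where
  carrier := {χ | ∃ (s₁ : V.B ⟶ W.A) (s₀ : V.Z ⟶ W.B),
    χ.a = V.f ≫ s₁ ∧ χ.b = V.g ≫ s₀ + s₁ ≫ W.f ∧ χ.c = s₀ ≫ W.g}
  add_mem' := by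
    rintro χ χ' ⟨s₁, s₀, h1, h2, h3⟩ ⟨t₁, t₀, h1', h2', h3'⟩
    exact ⟨s₁ + t₁, s₀ + t₀, by
      simp [h1, h1', Preadditive.comp_add], by
      simp only [Hom.add_b, h2, h2', Preadditive.comp_add, Preadditive.add_comp]
      abel, by simp [h3, h3', Preadditive.add_comp]⟩
  zero_mem' := ⟨0, 0, by simp, by simp, by simp⟩
  neg_mem' := by
    rintro χ ⟨s₁, s₀, h1, h2, h3⟩
    exact ⟨-s₁, -s₀, by simp [h1], by simp [h2]; abel, by simp [h3]⟩

lemma comp_null {U V W : Obj C} (χ : Hom U V) (ψ : Hom V W)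
    (h : χ ∈ nullHomotopic U V) : χ.comp ψ ∈ nullHomotopic U W := by
  obtain ⟨s₁, s₀, h1, h2, h3⟩ := h
  refine ⟨s₁ ≫ ψ.a, s₀ ≫ ψ.b, ?_, ?_, ?_⟩
  · simp [h1]
  · simp only [Hom.comp_b, h2, Preadditive.add_comp, Category.assoc, ψ.comm₁]
  · simp only [Hom.comp_c, h3, Category.assoc, ψ.comm₂]

lemma null_comp {U V W : Obj C} (φ : Hom U V) (χ : Hom V W)
    (h : χ ∈ nullHomotopic V W) : φ.comp χ ∈ nullHomotopic U W := by
  obtain ⟨s₁, s₀, h1, h2, h3⟩ := h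
  refine ⟨φ.b ≫ s₁, φ.c ≫ s₀, ?_, ?_, ?_⟩
  · simp only [Hom.comp_a, h1, ← Category.assoc, φ.comm₁]
  · simp only [Hom.comp_b, h2, Preadditive.comp_add, ← Category.assoc, φ.comm₂]
  · simp [h3]

instance instCategory : Category (Obj C) where
  Hom V W := Hom V W ⧸ nullHomotopic V W
  id V := QuotientAddGroup.mk (Hom.id V)
  comp := Quotient.map₂ Hom.comp (by
    intro φ φ' hφ ψ ψ' hψ
    replace hφ := QuotientAddGroup.leftRel_apply.mp hφ
    replace hψ := QuotientAddGroup.leftRel_apply.mp hψ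
    refine QuotientAddGroup.leftRel_apply.mpr ?_
    have : -φ.comp ψ + φ'.comp ψ' = (-φ + φ').comp ψ' + φ.comp (-ψ + ψ') := by
      refine Hom.ext ?_ ?_ ?_ <;>
        simp [Hom.comp, Preadditive.add_comp, Preadditive.comp_add,
          Preadditive.neg_comp, Preadditive.comp_neg] <;> abel
    rw [this]
    exact AddSubgroup.add_mem _ (comp_null _ _ hφ) (null_comp _ _ hψ))
  id_comp := by
    rintro V W ⟨φ⟩
    exact congrArg (QuotientAddGroup.mk)
      (Hom.ext (by simp [Hom.comp, Hom.id]) (by simp [Hom.comp, Hom.id])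
        (by simp [Hom.comp, Hom.id]))
  comp_id := by
    rintro V W ⟨φ⟩
    exact congrArg (QuotientAddGroup.mk)
      (Hom.ext (by simp [Hom.comp, Hom.id]) (by simp [Hom.comp, Hom.id])
        (by simp [Hom.comp, Hom.id]))
  assoc := by
    rintro U V W X ⟨φ⟩ ⟨ψ⟩ ⟨ρ⟩
    exact congrArg (QuotientAddGroup.mk)
      (Hom.ext (by simp [Hom.comp]) (by simp [Hom.comp]) (by simp [Hom.comp]))

/-- The homotopy class of a chain map, as a morphism in the heart. -/
def mkHom {V W : Obj C} (φ : Hom V W) : V ⟶ W := QuotientAddGroup.mk φ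

lemma mkHom_surjective {V W : Obj C} : Function.Surjective (mkHom (V := V) (W := W)) :=
  fun q => Quotient.inductionOn q (fun φ => ⟨φ, rfl⟩)

@[simp] lemma mkHom_comp {U V W : Obj C} (φ : Hom U V) (ψ : Hom V W) :
    mkHom φ ≫ mkHom ψ = mkHom (φ.comp ψ) := rfl

instance homAddCommGroup (V W : Obj C) : AddCommGroup (V ⟶ W) :=
  inferInstanceAs (AddCommGroup (Hom V W ⧸ nullHomotopic V W))

lemma mkHom_add {V W : Obj C} (φ ψ : Hom V W) :
    (mkHom (φ + ψ) : V ⟶ W) = mkHom φ + mkHom ψ := rfl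

instance : Preadditive (Obj C) where
  homGroup := homAddCommGroup
  add_comp := by
    rintro U V W ⟨φ⟩ ⟨φ'⟩ ⟨ψ⟩
    show mkHom ((φ + φ').comp ψ) = mkHom ((φ.comp ψ) + (φ'.comp ψ))
    rw [Hom.add_comp]
  comp_add := by
    rintro U V W ⟨φ⟩ ⟨ψ⟩ ⟨ψ'⟩
    show mkHom (φ.comp (ψ + ψ')) = mkHom ((φ.comp ψ) + (φ.comp ψ'))
    rw [Hom.comp_add]

open ZeroObject in
/-- The object `P_X = [0 ⟶ 0 ⟶ X]`. -/
noncomputable def P (X : C) : Obj C where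
  A := 0
  B := 0
  Z := X
  f := 0
  g := 0
  w := by simp
  mono := by infer_instance
  exact := ShortComplex.exact_of_isZero_X₂ _ (isZero_zero C)

/-- The functor `P : C ⥤ 𝒜`, `X ↦ [0 ⟶ 0 ⟶ X]`. -/
noncomputable def Pfunctor : C ⥤ Obj C where
  obj := P
  map {X Y} u := mkHom ⟨0, 0, u, by simp [P]; rfl, by simp [P]; exact (Limits.zero_comp).symm⟩
  map_id X := congrArg QuotientAddGroup.mk
    (Hom.ext (by simp [Hom.id, P]; rfl) (by simp [Hom.id, P]; rfl) (by simp [Hom.id, P]))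
  map_comp {X Y Z} u v := congrArg QuotientAddGroup.mk
    (Hom.ext (by simp [Hom.comp]) (by simp [Hom.comp]) (by simp [Hom.comp]; rfl))

/-- The heart object `[Ker g ⟶ B ⟶ Z]` associated to a morphism `g : B ⟶ Z`. -/
noncomputable def kernelObj {B Z : C} (g : B ⟶ Z) : Obj C where
  A := kernel g
  B := B
  Z := Z
  f := kernel.ι g
  g := g
  w := kernel.condition g
  mono := inferInstance
  exact := ShortComplex.exact_of_f_is_kernel _ (kernelIsKernel g)

namespace Aux

variable {C : Type*} [Category C] [Abelian C]

lemma mkHom_eq_iff {V W : Obj C} (φ ψ : Hom V W) :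
    mkHom φ = mkHom ψ ↔ -φ + ψ ∈ nullHomotopic V W :=
  QuotientAddGroup.eq

lemma mkHom_eq_zero_iff {V W : Obj C} (φ : Hom V W) :
    mkHom φ = 0 ↔ φ ∈ nullHomotopic V W :=
  QuotientAddGroup.eq_zero_iff φ

/-- If `⟦e⟧ : V ⟶ W` is an epimorphism in the heart, then `(e.c, W.g)` is a split
epimorphism in `C`. -/
lemma epi_split {V W : Obj C} (e : Hom V W) (he : Epi (mkHom e)) :
    ∃ (p : W.Z ⟶ V.Z) (q : W.Z ⟶ W.B), p ≫ e.c + q ≫ W.g = 𝟙 W.Z := by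
  set m : (V.Z ⊞ W.B : C) ⟶ W.Z := biprod.desc e.c W.g with hm
  have hwf : (W.f ≫ biprod.inr) ≫ m = 0 := by
    simp [hm, W.w]
  have hs₁ : (e.b ≫ biprod.inr - V.g ≫ biprod.inl) ≫ m = 0 := by
    simp [hm, Preadditive.sub_comp, e.comm₂]
  let φ : Hom W (kernelObj m) :=
    ⟨kernel.lift m (W.f ≫ biprod.inr) hwf, biprod.inr, 𝟙 W.Z,
      (kernel.lift_ι m _ hwf).symm, by simp [kernelObj, hm]⟩
  have hnull : e.comp φ ∈ nullHomotopic V (kernelObj m) := by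
    refine ⟨kernel.lift m (e.b ≫ biprod.inr - V.g ≫ biprod.inl) hs₁, biprod.inl, ?_, ?_, ?_⟩
    · show (e.a ≫ kernel.lift m (W.f ≫ biprod.inr) hwf : V.A ⟶ kernel m) =
        V.f ≫ kernel.lift m (e.b ≫ biprod.inr - V.g ≫ biprod.inl) hs₁
      rw [← cancel_mono (kernel.ι m)]
      show (e.a ≫ kernel.lift m (W.f ≫ biprod.inr) hwf) ≫ kernel.ι m = _
      rw [Category.assoc, kernel.lift_ι, Category.assoc, kernel.lift_ι]
      rw [← Category.assoc, ← e.comm₁]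
      simp [Preadditive.comp_sub, ← Category.assoc, V.w]
    · show e.b ≫ biprod.inr = V.g ≫ biprod.inl + _ ≫ kernel.ι m
      rw [kernel.lift_ι]
      abel
    · show e.c ≫ 𝟙 W.Z = biprod.inl ≫ m
      simp [hm]
  have hzero : mkHom e ≫ mkHom φ = mkHom e ≫ 0 := by
    rw [mkHom_comp, comp_zero]
    exact (mkHom_eq_zero_iff _).mpr hnull
  have hφ : mkHom φ = 0 := by
    haveI := he
    exact (cancel_epi (mkHom e)).mp hzero
  obtain ⟨s₁, s₀, h1, h2, h3⟩ := (mkHom_eq_zero_iff φ).mp hφ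
  change W.Z ⟶ (V.Z ⊞ W.B : C) at s₀
  have h3' : 𝟙 W.Z = s₀ ≫ m := h3
  refine ⟨s₀ ≫ biprod.fst, s₀ ≫ biprod.snd, ?_⟩
  have hdesc : (biprod.fst ≫ e.c + biprod.snd ≫ W.g : (V.Z ⊞ W.B : C) ⟶ W.Z) = m := by
    apply biprod.hom_ext' <;> simp [hm]
  calc (s₀ ≫ biprod.fst) ≫ e.c + (s₀ ≫ biprod.snd) ≫ W.g
      = s₀ ≫ (biprod.fst ≫ e.c + biprod.snd ≫ W.g) := by
        simp [Preadditive.comp_add]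
    _ = 𝟙 W.Z := by rw [hdesc, ← h3']

lemma projective_P (X : C) : Projective (P X) := by
  constructor
  intro E Y f e he
  obtain ⟨er, rfl⟩ := mkHom_surjective e
  obtain ⟨fr, rfl⟩ := mkHom_surjective f
  obtain ⟨p, q, hpq⟩ := epi_split er he
  have comm₁ : (P X).f ≫ (0 : (P X).B ⟶ E.B) = 0 ≫ E.f := by
    simp
  have comm₂ : (P X).g ≫ (fr.c ≫ p) = (0 : (P X).B ⟶ E.B) ≫ E.g := by
    apply (isZero_zero C).eq_of_src
  refine ⟨mkHom ⟨0, 0, fr.c ≫ p, comm₁, comm₂⟩, ?_⟩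
  rw [mkHom_comp]
  refine (mkHom_eq_iff _ _).mpr ⟨0, fr.c ≫ q, ?_, ?_, ?_⟩
  · apply (isZero_zero C).eq_of_src
  · apply (isZero_zero C).eq_of_src
  · show -((fr.c ≫ p) ≫ er.c) + fr.c = (fr.c ≫ q) ≫ Y.g
    have h := congrArg (fun t => fr.c ≫ t) hpq
    simp only [Preadditive.comp_add, Category.comp_id] at h
    simp only [Category.assoc]
    nth_rewrite 2 [← h]
    abel

/-- The canonical chain map `P V.Z ⟶ V` given by the identity in degree `0`. -/
noncomputable def epsHom (V : Obj C) : Hom (P V.Z) V :=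
  ⟨0, 0, 𝟙 V.Z, (isZero_zero C).eq_of_src _ _, (isZero_zero C).eq_of_src _ _⟩

lemma epi_eps (V : Obj C) : Epi (mkHom (epsHom V)) := by
  apply Preadditive.epi_of_cancel_zero
  intro T g hg
  obtain ⟨gr, rfl⟩ := mkHom_surjective g
  rw [mkHom_comp] at hg
  obtain ⟨s₁, s₀, h1, h2, h3⟩ := (mkHom_eq_zero_iff _).mp hg
  change V.Z ⟶ T.B at s₀
  have h3' : gr.c = s₀ ≫ T.g := by
    have : ((epsHom V).comp gr).c = 𝟙 V.Z ≫ gr.c := rfl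
    rw [this, Category.id_comp] at h3
    exact h3
  -- the middle component factors through `T.f` thanks to exactness
  have hb : (gr.b - V.g ≫ s₀) ≫ T.g = 0 := by
    rw [Preadditive.sub_comp, ← gr.comm₂, h3']
    simp
  haveI : Mono T.f := T.mono
  have hl : T.exact.lift (gr.b - V.g ≫ s₀) hb ≫ T.f = gr.b - V.g ≫ s₀ :=
    T.exact.lift_f _ hb
  refine (mkHom_eq_zero_iff gr).mpr
    ⟨T.exact.lift (gr.b - V.g ≫ s₀) hb, s₀, ?_, ?_, ?_⟩
  · rw [← cancel_mono T.f, Category.assoc, hl, Preadditive.comp_sub, gr.comm₁,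
      ← Category.assoc, V.w, zero_comp, sub_zero]
  · rw [hl]
    abel
  · exact h3'

lemma projective_iso (V : Obj C) (hV : Projective V) : ∃ X : C, Nonempty (V ≅ P X) := by
  haveI := hV
  haveI := epi_eps V
  obtain ⟨σ, hσ⟩ : ∃ σ : V ⟶ P V.Z, σ ≫ mkHom (epsHom V) = 𝟙 V :=
    ⟨Projective.factorThru (𝟙 V) (mkHom (epsHom V)),
      Projective.factorThru_comp (𝟙 V) (mkHom (epsHom V))⟩
  obtain ⟨σr, rfl⟩ := mkHom_surjective σ
  rw [show (𝟙 V : V ⟶ V) = mkHom (Hom.id V) from rfl, mkHom_comp] at hσ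
  obtain ⟨s₁, s₀, h1, h2, h3⟩ := (mkHom_eq_iff _ _).mp hσ
  set sc : V.Z ⟶ V.Z := σr.c ≫ 𝟙 V.Z with hsc
  have ea : (-(σr.comp (epsHom V)) + Hom.id V).a = 𝟙 V.A := by
    show -(σr.a ≫ (0 : (P V.Z).A ⟶ V.A)) + 𝟙 V.A = 𝟙 V.A
    simp
  have eb : (-(σr.comp (epsHom V)) + Hom.id V).b = 𝟙 V.B := by
    show -(σr.b ≫ (0 : (P V.Z).B ⟶ V.B)) + 𝟙 V.B = 𝟙 V.B
    simp
  have ec : (-(σr.comp (epsHom V)) + Hom.id V).c = -sc + 𝟙 V.Z := rfl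
  have h1' : 𝟙 V.A = V.f ≫ s₁ := ea.symm.trans h1
  have h2' : 𝟙 V.B = V.g ≫ s₀ + s₁ ≫ V.f := eb.symm.trans h2
  have h3' : -sc + 𝟙 V.Z = s₀ ≫ V.g := ec.symm.trans h3
  have hb0 : σr.b = 0 := (isZero_zero C).eq_of_tgt _ _
  have hgs : V.g ≫ sc = 0 := by
    rw [hsc]
    exact (Category.assoc V.g σr.c (𝟙 V.Z)).symm.trans (by rw [σr.comm₂, hb0, zero_comp]; exact zero_comp)
  have hs_eq : sc = 𝟙 V.Z - s₀ ≫ V.g := by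
    rw [← h3']; abel
  have hss : sc ≫ sc = sc := by
    nth_rewrite 1 [hs_eq]
    rw [Preadditive.sub_comp, Category.id_comp, Category.assoc, hgs, comp_zero, sub_zero]
  -- split the idempotent through its image
  set π : V.Z ⟶ image sc := factorThruImage sc with hπ
  set ι : image sc ⟶ V.Z := image.ι sc with hι
  have hfac : π ≫ ι = sc := image.fac sc
  have hιs : ι ≫ sc = ι := by
    rw [← cancel_epi π, ← Category.assoc, hfac]
    exact hss
  have hιπ : ι ≫ π = 𝟙 (image sc) := by
    rw [← cancel_mono ι, Category.assoc, hfac, Category.id_comp, hιs]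
  have hgπ : V.g ≫ π = 0 := by
    rw [← cancel_mono ι, Category.assoc, hfac, hgs, zero_comp]
  let α : Hom V (P (image sc)) :=
    ⟨0, 0, π, (isZero_zero C).eq_of_tgt _ _, by
      rw [show (P (image sc)).g = 0 from rfl]
      rw [zero_comp]; exact hgπ⟩
  let β : Hom (P (image sc)) V :=
    ⟨0, 0, ι, (isZero_zero C).eq_of_src _ _, (isZero_zero C).eq_of_src _ _⟩
  refine ⟨image sc, ⟨⟨mkHom α, mkHom β, ?_, ?_⟩⟩⟩
  · rw [mkHom_comp, show (𝟙 V : V ⟶ V) = mkHom (Hom.id V) from rfl]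
    refine (mkHom_eq_iff _ _).mpr ⟨s₁, s₀, ?_, ?_, ?_⟩
    · show -((0 : V.A ⟶ (P (image sc)).A) ≫ 0) + 𝟙 V.A = V.f ≫ s₁
      simpa using h1'
    · show -((0 : V.B ⟶ (P (image sc)).B) ≫ 0) + 𝟙 V.B = V.g ≫ s₀ + s₁ ≫ V.f
      simpa using h2'
    · show -(π ≫ ι) + 𝟙 V.Z = s₀ ≫ V.g
      rw [hfac]; exact h3'
  · rw [mkHom_comp, show (𝟙 (P (image sc)) : _) = mkHom (Hom.id (P (image sc))) from rfl]
    refine congrArg mkHom (Hom.ext ?_ ?_ ?_)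
    · exact (isZero_zero C).eq_of_src _ _
    · exact (isZero_zero C).eq_of_src _ _
    · exact hιπ

instance : (Pfunctor : C ⥤ Obj C).Faithful := by
  constructor
  intro X Y u v h
  obtain ⟨s₁, s₀, h1, h2, h3⟩ := (mkHom_eq_iff _ _).mp h
  have : -u + v = s₀ ≫ (P Y).g := h3
  rw [show (P Y).g = 0 from rfl] at this
  simp only [comp_zero, neg_add_eq_zero] at this
  exact (eq_of_sub_eq_zero ((sub_eq_neg_add v u).trans this)).symm

instance : (Pfunctor : C ⥤ Obj C).Full := by
  constructor
  intro X Y φ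
  obtain ⟨r, rfl⟩ := mkHom_surjective φ
  refine ⟨r.c, congrArg mkHom (Hom.ext ?_ ?_ rfl)⟩
  · exact (isZero_zero C).eq_of_src _ _
  · exact (isZero_zero C).eq_of_src _ _

end Aux

end ARHeart

open CategoryTheory Limits ARHeart in
/-- every `P_X = [0 ⟶ 0 ⟶ X]` is projective in the heart `𝒜`, every
projective object of `𝒜` is isomorphic to some `P_X`, and hence the full subcategory
of projective objects of `𝒜` is equivalent to `C`. -/
theorem stmt5 {C : Type*} [Category C] [Abelian C] :
    (∀ X : C, Projective (ARHeart.P X)) ∧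
    (∀ V : ARHeart.Obj C, Projective V → ∃ X : C, Nonempty (V ≅ ARHeart.P X)) ∧
    Nonempty ((ObjectProperty.FullSubcategory (fun V : ARHeart.Obj C => Projective V)) ≌ C) := by
  refine ⟨fun X => ARHeart.Aux.projective_P X, fun V hV => ARHeart.Aux.projective_iso V hV, ?_⟩
  let F : C ⥤ ObjectProperty.FullSubcategory (fun V : ARHeart.Obj C => Projective V) :=
    ObjectProperty.lift _ ARHeart.Pfunctor (fun X => ARHeart.Aux.projective_P X)
  haveI : F.EssSurj := ⟨fun V => by
    obtain ⟨X, ⟨i⟩⟩ := ARHeart.Aux.projective_iso V.obj V.property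
    exact ⟨X, ⟨ObjectProperty.isoMk _ i.symm⟩⟩⟩
  haveI : F.Faithful := Functor.Faithful.of_comp_iso
    (ObjectProperty.liftCompιIso _ ARHeart.Pfunctor (fun X => ARHeart.Aux.projective_P X))
  haveI : F.Full := Functor.Full.of_comp_faithful_iso
    (ObjectProperty.liftCompιIso _ ARHeart.Pfunctor (fun X => ARHeart.Aux.projective_P X))
  haveI : F.IsEquivalence := {}
  exact ⟨F.asEquivalence.symm⟩
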